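/- Under the partially linear logistic model with 0 < P(X=1|Z) < 1 almost surely, sign(β) = sign(E[Cov(Y, X | Z)]); in particular β > 0 if and only if E[Cov(Y, X | Z)] > 0, and β < 0 if and only if E[Cov(Y, X | Z)] < 0. -/

import Mathlib

/-!
Write `p = E[X | Z]`. Since `X ∈ {0, 1}`, the model reads `E[Y | X, Z] = a + b X` with
`a = expit (g Z)` and `b = expit (β + g Z) - expit (g Z)`, both functions of `Z`. Conditioning
down to `Z` gives `E[Y | Z] = a + b p` and, as `X² = X`, `E[Y X | Z] = (a + b) p`, hence
`Cov(Y, X | Z) = b p (1 - p)`. Since `expit` is strictly increasing, `b` has the sign of `β`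
everywhere, and `0 < p < 1` almost surely, so the integrand, and with it its expectation, has the
sign of `β`.
-/

open MeasureTheory ProbabilityTheory

noncomputable def expit (t : ℝ) : ℝ := 1 / (1 + Real.exp (-t))

lemma expit_eq_sigmoid : expit = Real.sigmoid :=
  funext fun _ => one_div _

lemma StrictMono.sign_sub_apply {f : ℝ → ℝ} (hf : StrictMono f) (a b : ℝ) :
    SignType.sign (f a - f b) = SignType.sign (a - b) := by
  rcases lt_trichotomy a b with h | rfl | h
  · rw [sign_neg (sub_neg.2 (hf h)), sign_neg (sub_neg.2 h)]
  · simp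
  · rw [sign_pos (sub_pos.2 (hf h)), sign_pos (sub_pos.2 h)]

lemma apply_mul_add_eq_of_eq_zero_or_eq_one (f : ℝ → ℝ) {x : ℝ} (hx : x = 0 ∨ x = 1) (β c : ℝ) :
    f (x * β + c) = f c + (f (β + c) - f c) * x := by
  rcases hx with rfl | rfl <;> simp

section SignOfIntegral

variable {α : Type*} {mα : MeasurableSpace α} {μ : Measure α} [NeZero μ] {f : α → ℝ}

lemma integral_pos_of_ae_pos (hf : Integrable f μ) (h : ∀ᵐ x ∂μ, 0 < f x) :
    0 < ∫ x, f x ∂μ := by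
  rw [integral_pos_iff_support_of_nonneg_ae (h.mono fun _ hx => hx.le) hf, pos_iff_ne_zero]
  intro h0
  obtain ⟨x, hx, hx0⟩ := (h.and (measure_eq_zero_iff_ae_notMem.1 h0)).exists
  exact hx0 hx.ne'

lemma sign_integral_eq_of_ae_sign_eq (hf : Integrable f μ) {s : SignType}
    (h : ∀ᵐ x ∂μ, SignType.sign (f x) = s) : SignType.sign (∫ x, f x ∂μ) = s := by
  cases s with
  | zero =>
    rw [integral_eq_zero_of_ae (h.mono fun _ hx => sign_eq_zero_iff.1 hx), sign_zero]
    rfl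
  | pos => exact sign_pos (integral_pos_of_ae_pos hf (h.mono fun _ hx => sign_eq_one_iff.1 hx))
  | neg =>
    have hneg := integral_pos_of_ae_pos (f := fun x => -f x) hf.neg
      (h.mono fun _ hx => neg_pos.2 (sign_eq_neg_one_iff.1 hx))
    rw [integral_neg, neg_pos] at hneg
    exact sign_neg hneg

lemma sign_integral_mul_mul_one_sub {b p : α → ℝ} (hb : Integrable b μ)
    (hp : AEStronglyMeasurable p μ) (hp01 : ∀ᵐ x ∂μ, 0 < p x ∧ p x < 1) {s : SignType}
    (hs : ∀ᵐ x ∂μ, SignType.sign (b x) = s) :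
    SignType.sign (∫ x, (b * p * (1 - p)) x ∂μ) = s := by
  have hint : Integrable (b * p * (1 - p)) μ := by
    rw [mul_assoc]
    refine hb.mul_bdd (hp.mul (aestronglyMeasurable_const.sub hp)) (c := 1)
      (hp01.mono fun x ⟨h0, h1⟩ => ?_)
    rw [Pi.mul_apply, Pi.sub_apply, Pi.one_apply, Real.norm_eq_abs,
      abs_of_pos (mul_pos h0 (sub_pos.2 h1))]
    nlinarith
  refine sign_integral_eq_of_ae_sign_eq hint ?_
  filter_upwards [hp01, hs] with x ⟨h0, h1⟩ hx
  rw [Pi.mul_apply, Pi.mul_apply, Pi.sub_apply, Pi.one_apply, sign_mul, sign_mul, hx,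
    sign_pos h0, sign_pos (sub_pos.2 h1), mul_one, mul_one]

end SignOfIntegral

lemma integrable_sigmoid_comp {α : Type*} {mα : MeasurableSpace α} {μ : Measure α}
    [IsFiniteMeasure μ] {f : α → ℝ} (hf : AEStronglyMeasurable f μ) :
    Integrable (fun x => Real.sigmoid (f x)) μ :=
  .of_bound (continuous_sigmoid.comp_aestronglyMeasurable hf) 1 <| ae_of_all _ fun _ => by
    rw [Real.norm_eq_abs, abs_of_pos (Real.sigmoid_pos _)]
    exact Real.sigmoid_le_one _

section ConditionalCovariance

variable {Ω : Type*} {m m₂ mΩ : MeasurableSpace Ω} {μ : Measure Ω}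

noncomputable def condCov (m : MeasurableSpace Ω) (Y X : Ω → ℝ) (μ : Measure[mΩ] Ω) : Ω → ℝ :=
  μ[Y * X | m] - μ[Y | m] * μ[X | m]

variable {X Y a b : Ω → ℝ}

lemma MeasureTheory.Integrable.mul_of_eq_zero_or_eq_one (hY : Integrable Y μ)
    (hX : ∀ ω, X ω = 0 ∨ X ω = 1) (hXm : AEStronglyMeasurable X μ) : Integrable (Y * X) μ :=
  hY.mul_bdd hXm (c := 1) (ae_of_all _ fun ω => by rcases hX ω with h | h <;> simp [h])

variable [IsFiniteMeasure μ]

lemma integrable_of_eq_zero_or_eq_one (hX : ∀ ω, X ω = 0 ∨ X ω = 1)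
    (hXm : AEStronglyMeasurable X μ) : Integrable X μ :=
  .of_bound hXm 1 (ae_of_all _ fun ω => by rcases hX ω with h | h <;> simp [h])

lemma condExp_eq_add_mul_condExp_of_condExp_eq_add_mul (hm : m ≤ m₂) (hm₂ : m₂ ≤ mΩ)
    (ha : StronglyMeasurable[m] a) (hb : StronglyMeasurable[m] b) (hai : Integrable a μ)
    (hbX : Integrable (b * X) μ) (hX : Integrable X μ) (hYX : μ[Y | m₂] =ᵐ[μ] a + b * X) :
    μ[Y | m] =ᵐ[μ] a + b * μ[X | m] := by
  have : IsFiniteMeasure (μ.trim hm₂) := isFiniteMeasure_trim hm₂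
  calc μ[Y | m] =ᵐ[μ] μ[μ[Y | m₂] | m] := (condExp_condExp_of_le hm hm₂).symm
    _ =ᵐ[μ] μ[a + b * X | m] := condExp_congr_ae hYX
    _ =ᵐ[μ] μ[a | m] + μ[b * X | m] := condExp_add hai hbX m
    _ =ᵐ[μ] a + b * μ[X | m] := by
      rw [condExp_of_stronglyMeasurable (hm.trans hm₂) ha hai]
      exact (condExp_mul_of_stronglyMeasurable_left hb hbX hX).add_left

lemma condExp_mul_eq_add_mul_condExp_of_condExp_eq_add_mul (hm : m ≤ m₂) (hm₂ : m₂ ≤ mΩ)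
    (hX : ∀ ω, X ω = 0 ∨ X ω = 1) (hXm₂ : StronglyMeasurable[m₂] X) (hY : Integrable Y μ)
    (ha : StronglyMeasurable[m] a) (hb : StronglyMeasurable[m] b) (hai : Integrable a μ)
    (hbi : Integrable b μ) (hYX : μ[Y | m₂] =ᵐ[μ] a + b * X) :
    μ[Y * X | m] =ᵐ[μ] (a + b) * μ[X | m] := by
  have : IsFiniteMeasure (μ.trim hm₂) := isFiniteMeasure_trim hm₂
  have hXm : AEStronglyMeasurable X μ := (hXm₂.mono hm₂).aestronglyMeasurable
  have hX_idem : (a + b * X) * X = (a + b) * X := by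
    funext ω
    rcases hX ω with h | h <;> simp [h]
  calc μ[Y * X | m] =ᵐ[μ] μ[μ[Y * X | m₂] | m] := (condExp_condExp_of_le hm hm₂).symm
    _ =ᵐ[μ] μ[(a + b) * X | m] := by
      refine condExp_congr_ae ?_
      rw [← hX_idem]
      exact (condExp_mul_of_aestronglyMeasurable_right hXm₂.aestronglyMeasurable
        (hY.mul_of_eq_zero_or_eq_one hX hXm) hY).trans (hYX.mul Filter.EventuallyEq.rfl)
    _ =ᵐ[μ] (a + b) * μ[X | m] :=
      condExp_mul_of_stronglyMeasurable_left (ha.add hb)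
        ((hai.add hbi).mul_of_eq_zero_or_eq_one hX hXm) (integrable_of_eq_zero_or_eq_one hX hXm)

lemma condCov_eq_of_condExp_eq_add_mul (hm : m ≤ m₂) (hm₂ : m₂ ≤ mΩ)
    (hX : ∀ ω, X ω = 0 ∨ X ω = 1) (hXm₂ : StronglyMeasurable[m₂] X) (hY : Integrable Y μ)
    (ha : StronglyMeasurable[m] a) (hb : StronglyMeasurable[m] b) (hai : Integrable a μ)
    (hbi : Integrable b μ) (hYX : μ[Y | m₂] =ᵐ[μ] a + b * X) :
    condCov m Y X μ =ᵐ[μ] b * μ[X | m] * (1 - μ[X | m]) := by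
  have hXm : AEStronglyMeasurable X μ := (hXm₂.mono hm₂).aestronglyMeasurable
  have hYm := condExp_eq_add_mul_condExp_of_condExp_eq_add_mul hm hm₂ ha hb hai
    (hbi.mul_of_eq_zero_or_eq_one hX hXm) (integrable_of_eq_zero_or_eq_one hX hXm) hYX
  have hYXm := condExp_mul_eq_add_mul_condExp_of_condExp_eq_add_mul hm hm₂ hX hXm₂ hY ha hb
    hai hbi hYX
  filter_upwards [hYm, hYXm] with ω hYω hYXω
  simp only [condCov, Pi.sub_apply, Pi.mul_apply, Pi.add_apply, Pi.one_apply, hYω, hYXω]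
  ring

end ConditionalCovariance

/-- STATEMENT 3: Under the partially linear logistic model
P(Y=1|X,Z) = expit(Xβ + g(Z)) with 0 < P(X=1|Z) < 1 a.s.,
sign(β) = sign(E[Cov(Y,X|Z)]). -/
theorem stmt4
    {Ω : Type*} {mΩ : MeasurableSpace Ω} {μ : Measure Ω} [IsProbabilityMeasure μ]
    {d : ℕ} (Z : Ω → (Fin d → ℝ)) (hZ : Measurable Z)
    (Y X : Ω → ℝ) (hYmeas : Measurable Y) (hXmeas : Measurable X)
    (hY01 : ∀ ω, Y ω = 0 ∨ Y ω = 1) (hX01 : ∀ ω, X ω = 0 ∨ X ω = 1)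
    (g : (Fin d → ℝ) → ℝ) (hg : Measurable g) (β : ℝ)
    (hmodel : μ[Y | MeasurableSpace.comap (fun ω => (X ω, Z ω)) inferInstance]
      =ᵐ[μ] fun ω => expit (X ω * β + g (Z ω)))
    (hpos : ∀ᵐ ω ∂μ, 0 < (μ[X | MeasurableSpace.comap Z inferInstance]) ω
      ∧ (μ[X | MeasurableSpace.comap Z inferInstance]) ω < 1) :
    (0 < β ↔
      0 < ∫ ω, ((μ[fun ω' => Y ω' * X ω' | MeasurableSpace.comap Z inferInstance]) ω
        - (μ[Y | MeasurableSpace.comap Z inferInstance]) ω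
          * (μ[X | MeasurableSpace.comap Z inferInstance]) ω) ∂μ)
    ∧ (β < 0 ↔
      ∫ ω, ((μ[fun ω' => Y ω' * X ω' | MeasurableSpace.comap Z inferInstance]) ω
        - (μ[Y | MeasurableSpace.comap Z inferInstance]) ω
          * (μ[X | MeasurableSpace.comap Z inferInstance]) ω) ∂μ < 0) := by
  rw [expit_eq_sigmoid] at hmodel
  set m : MeasurableSpace Ω := MeasurableSpace.comap Z inferInstance
  set b : Ω → ℝ := fun ω => Real.sigmoid (β + g (Z ω)) - Real.sigmoid (g (Z ω))
  have hgZ : Measurable[m] fun ω => g (Z ω) := hg.comp (comap_measurable Z)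
  have hσ : Measurable Real.sigmoid := continuous_sigmoid.measurable
  have hbi : Integrable b μ :=
    (integrable_sigmoid_comp (measurable_const.add (hg.comp hZ)).aestronglyMeasurable).sub
      (integrable_sigmoid_comp (hg.comp hZ).aestronglyMeasurable)
  have hcov : condCov m Y X μ =ᵐ[μ] b * μ[X | m] * (1 - μ[X | m]) :=
    condCov_eq_of_condExp_eq_add_mul
      (measurable_snd.comp (comap_measurable fun ω => (X ω, Z ω))).comap_le
      (hXmeas.prodMk hZ).comap_le hX01 (measurable_fst.comp (comap_measurable _)).stronglyMeasurable
      (integrable_of_eq_zero_or_eq_one hY01 hYmeas.aestronglyMeasurable)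
      (hσ.comp hgZ).stronglyMeasurable
      ((hσ.comp (measurable_const.add hgZ)).sub (hσ.comp hgZ)).stronglyMeasurable
      (integrable_sigmoid_comp (hg.comp hZ).aestronglyMeasurable) hbi
      (hmodel.trans (ae_of_all _ fun ω =>
        apply_mul_add_eq_of_eq_zero_or_eq_one _ (hX01 ω) β (g (Z ω))))
  have hsign : SignType.sign (∫ ω, condCov m Y X μ ω ∂μ) = SignType.sign β := by
    rw [integral_congr_ae hcov]
    refine sign_integral_mul_mul_one_sub hbi
      (stronglyMeasurable_condExp.mono hZ.comap_le).aestronglyMeasurable hpos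
      (ae_of_all _ fun ω => ?_)
    rw [Real.sigmoid_strictMono.sign_sub_apply, add_sub_cancel_right]
  change (0 < β ↔ 0 < ∫ ω, condCov m Y X μ ω ∂μ) ∧ (β < 0 ↔ ∫ ω, condCov m Y X μ ω ∂μ < 0)
  simp only [← sign_eq_one_iff, ← sign_eq_neg_one_iff, hsign, and_self]
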